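/- Suppose for each group i = 1, ..., a we have i.i.d. real random variables X_{i1}, X_{i2}, ... with normalized distribution function F_i, the groups being independent, and sample sizes n_i → ∞. Then the plug-in estimator p̂_i = ∫ Ĝ dF̂_i, where F̂_i is the empirical normalized distribution function of the first n_i observations in group i and Ĝ = (1/a)∑_ℓ F̂_ℓ, converges in probability to p_i = ∫ G dF_i = (1/a)∑_ℓ w_{ℓi}, as min_i n_i → ∞. -/

import Mathlib

open MeasureTheory ProbabilityTheory Filter

/-- The count function `c(u) = 1{u>0} + (1/2)·1{u=0}`. -/
noncomputable def c (u : ℝ) : ℝ := if 0 < u then 1 else if u = 0 then 1/2 else 0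

/-!
Since `p̂_i - p_i = (1/a) ∑_ℓ (ŵ_{ℓi} - w_{ℓi})`, it suffices that every `ŵ_{ℓi}` tends to
`w_{ℓi}` in probability. For `ℓ = i` the antisymmetry `c u + c (-u) = 1` gives `ŵ_{ii} = 1/2`
exactly. For `ℓ ≠ i`, `ŵ_{ℓi}` averages the `n_i n_ℓ` terms `c (X_{ik} - X_{ℓr})`, which all have
mean `w_{ℓi}`, deviate from it by at most `1`, and are independent unless they share an
observation. Hence `E (ŵ_{ℓi} - w_{ℓi})² ≤ 1/n_i + 1/n_ℓ`, and Chebyshev's inequality concludes.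
-/

open Finset Topology

lemma c_nonneg (u : ℝ) : 0 ≤ c u := by unfold c; split_ifs <;> norm_num

lemma c_le_one (u : ℝ) : c u ≤ 1 := by unfold c; split_ifs <;> norm_num

lemma c_add_c_neg (u : ℝ) : c u + c (-u) = 1 := by
  unfold c
  rcases lt_trichotomy u 0 with h | rfl | h
  · simp [h.not_gt, h.ne, h]
  · norm_num
  · simp [h, h.ne', h.not_gt]

lemma c_sub (x y : ℝ) :
    c (x - y) = (if y < x then 1 else 0) + 1 / 2 * (if y = x then 1 else 0) := by
  unfold c
  rcases lt_trichotomy y x with h | rfl | h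
  · simp [h, h.ne]
  · simp
  · simp [h.not_gt, h.ne', (sub_neg.2 h).not_gt, (sub_neg.2 h).ne]

lemma measurable_c : Measurable c :=
  Measurable.ite measurableSet_Ioi measurable_const <|
    Measurable.ite (measurableSet_singleton 0) measurable_const measurable_const

lemma sum_sum_c_sub_self {ι : Type*} (s : Finset ι) (f : ι → ℝ) :
    ∑ k ∈ s, ∑ r ∈ s, c (f k - f r) = (#s : ℝ) ^ 2 / 2 := by
  have hsymm : ∀ k r, c (f k - f r) + c (f r - f k) = 1 := fun k r => by
    rw [← neg_sub (f k), c_add_c_neg]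
  have h : ∑ k ∈ s, ∑ r ∈ s, c (f k - f r) + ∑ k ∈ s, ∑ r ∈ s, c (f r - f k) = (#s : ℝ) ^ 2 := by
    simp [← sum_add_distrib, hsymm, sq]
  rw [sum_comm (s := s) (t := s) (f := fun k r => c (f r - f k))] at h
  linarith

lemma card_filter_fst_eq_or_snd_eq_le {ι κ : Type*} [DecidableEq ι] [DecidableEq κ]
    (s : Finset ι) (t : Finset κ) (p : ι × κ) :
    #{q ∈ s ×ˢ t | p.1 = q.1 ∨ p.2 = q.2} ≤ #t + #s := by
  calc _ ≤ #({p.1} ×ˢ t ∪ s ×ˢ {p.2}) := card_le_card fun q hq => by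
        simp only [mem_filter, mem_product] at hq
        simp only [mem_union, mem_product, mem_singleton]
        tauto
    _ ≤ #t + #s := (card_union_le _ _).trans (by simp)

section Deterministic

variable {Ω : Type*}

/-- `wHat (X i) (X ℓ) (n i) (n ℓ)` is the paper's `ŵ_{ℓi}`. -/
noncomputable def wHat (Y Z : ℕ → Ω → ℝ) (n m : ℕ) (ω : Ω) : ℝ :=
  1 / ((m : ℝ) * n) * ∑ k ∈ range n, ∑ r ∈ range m, c (Y k ω - Z r ω)

lemma wHat_self (Y : ℕ → Ω → ℝ) {n : ℕ} (hn : 0 < n) (ω : Ω) : wHat Y Y n n ω = 1 / 2 := by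
  rw [wHat, sum_sum_c_sub_self, card_range]
  field_simp

lemma wHat_mem_Icc (Y Z : ℕ → Ω → ℝ) {n m : ℕ} (hn : 0 < n) (hm : 0 < m) (ω : Ω) :
    wHat Y Z n m ω ∈ Set.Icc 0 1 := by
  have hsum : ∑ k ∈ range n, ∑ r ∈ range m, c (Y k ω - Z r ω) ≤ m * n := by
    calc _ ≤ ∑ k ∈ range n, ∑ r ∈ range m, (1 : ℝ) :=
          sum_le_sum fun k _ => sum_le_sum fun r _ => c_le_one _
      _ = m * n := by simp [mul_comm]
  refine ⟨mul_nonneg (by positivity) (sum_nonneg fun _ _ => sum_nonneg fun _ _ => c_nonneg _), ?_⟩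
  rw [wHat, one_div_mul_eq_div, div_le_one (by positivity)]
  exact hsum

lemma wHat_sub (Y Z : ℕ → Ω → ℝ) {n m : ℕ} (hn : 0 < n) (hm : 0 < m) (w : ℝ) (ω : Ω) :
    wHat Y Z n m ω - w =
      1 / ((m : ℝ) * n) * ∑ k ∈ range n, ∑ r ∈ range m, (c (Y k ω - Z r ω) - w) := by
  simp only [wHat, sum_sub_distrib, sum_const, card_range, nsmul_eq_mul]
  field_simp

lemma setOf_lt_abs_mean_subset {ι : Type*} (s : Finset ι) (S : ι → Ω → ℝ) {ε : ℝ} (hε : 0 ≤ ε) :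
    {ω | ε < |(#s : ℝ)⁻¹ * ∑ ℓ ∈ s, S ℓ ω|} ⊆ ⋃ ℓ ∈ s, {ω | ε < |S ℓ ω|} := by
  intro ω hω
  by_contra h
  simp only [Set.mem_iUnion, Set.mem_ofPred_eq, not_exists, not_lt] at h hω
  refine absurd hω (not_lt.2 ?_)
  calc |(#s : ℝ)⁻¹ * ∑ ℓ ∈ s, S ℓ ω| ≤ (#s : ℝ)⁻¹ * ∑ ℓ ∈ s, |S ℓ ω| := by
        rw [abs_mul, abs_inv, Nat.abs_cast]
        exact mul_le_mul_of_nonneg_left (abs_sum_le_sum_abs _ _) (by positivity)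
    _ ≤ (#s : ℝ)⁻¹ * (#s * ε) := by
        gcongr
        simpa using sum_le_sum h
    _ ≤ ε := by
        by_cases h0 : (#s : ℝ) = 0 <;> simp [h0, hε]

end Deterministic

section Probability

variable {Ω : Type*} [MeasurableSpace Ω] {μ : Measure Ω}

lemma ProbabilityTheory.iIndepFun.sumElim_of_ne {ι : Type*} {X : ι → ℕ → Ω → ℝ}
    (h : iIndepFun (fun q : ι × ℕ => X q.1 q.2) μ) {i ℓ : ι} (hiℓ : i ≠ ℓ) :
    iIndepFun (Sum.elim (X i) (X ℓ)) μ := by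
  convert h.precomp ((Prod.mk_right_injective i).sumElim (Prod.mk_right_injective ℓ)
    fun k r => by simp [hiℓ]) with j
  rcases j with k | r <;> rfl

lemma integral_c_sub [IsFiniteMeasure μ] {Y Z : Ω → ℝ} (hY : Measurable Y) (hZ : Measurable Z) :
    ∫ ω, c (Y ω - Z ω) ∂μ = μ.real {ω | Z ω < Y ω} + 1 / 2 * μ.real {ω | Z ω = Y ω} := by
  have hlt : MeasurableSet {ω | Z ω < Y ω} := measurableSet_lt hZ hY
  have heq : MeasurableSet {ω | Z ω = Y ω} := measurableSet_eq_fun hZ hY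
  have hc : (fun ω => c (Y ω - Z ω)) = fun ω =>
      {ω | Z ω < Y ω}.indicator 1 ω + 1 / 2 * {ω | Z ω = Y ω}.indicator (1 : Ω → ℝ) ω := by
    ext ω
    simp only [c_sub, Set.indicator_apply, Set.mem_ofPred_eq, Pi.one_apply]
  rw [hc, integral_add ((integrable_const 1).indicator hlt)
      (((integrable_const 1).indicator heq).const_mul _),
    integral_const_mul, integral_indicator_one hlt, integral_indicator_one heq]

lemma integral_c_mem_Icc [IsProbabilityMeasure μ] (f : Ω → ℝ) :
    ∫ ω, c (f ω) ∂μ ∈ Set.Icc 0 1 := by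
  refine ⟨integral_nonneg fun _ => c_nonneg _, (le_abs_self _).trans ?_⟩
  simpa using norm_integral_le_of_norm_le_const (μ := μ) (f := fun ω => c (f ω)) (C := 1)
    (ae_of_all _ fun ω => by rw [Real.norm_eq_abs, abs_of_nonneg (c_nonneg _)]; exact c_le_one _)

lemma measurable_wHat {Y Z : ℕ → Ω → ℝ} (hY : ∀ k, Measurable (Y k)) (hZ : ∀ r, Measurable (Z r))
    (n m : ℕ) : Measurable (wHat Y Z n m) :=
  (Finset.measurable_sum _ fun k _ => Finset.measurable_sum _ fun r _ =>
    measurable_c.comp ((hY k).sub (hZ r))).const_mul _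

lemma measureReal_lt_abs_le_integral_sq_div [IsFiniteMeasure μ] {S : Ω → ℝ}
    (hS : Integrable (fun ω => S ω ^ 2) μ) {ε : ℝ} (hε : 0 < ε) :
    μ.real {ω | ε < |S ω|} ≤ (∫ ω, S ω ^ 2 ∂μ) / ε ^ 2 := by
  have hsub : {ω | ε < |S ω|} ⊆ {ω | ε ^ 2 ≤ S ω ^ 2} := fun ω hω => by
    simpa only [Set.mem_ofPred_eq, ← sq_abs (S ω)] using pow_le_pow_left₀ hε.le (le_of_lt hω) 2
  rw [le_div_iff₀ (by positivity), mul_comm]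
  exact (mul_le_mul_of_nonneg_left (measureReal_mono hsub) (by positivity)).trans
    (mul_meas_ge_le_integral_of_nonneg (ae_of_all _ fun ω => sq_nonneg _) hS _)

lemma integral_sq_sum_sum_sub_le [IsProbabilityMeasure μ] {ι κ : Type*} {Z : ι → κ → Ω → ℝ}
    {m : ℝ} (s : Finset ι) (t : Finset κ) (hZ : ∀ k r, Measurable (Z k r))
    (hZm : ∀ k r ω, |Z k r ω - m| ≤ 1) (hmean : ∀ k r, ∫ ω, Z k r ω ∂μ = m)
    (hind : ∀ k r k' r', k ≠ k' → r ≠ r' → IndepFun (Z k r) (Z k' r') μ) :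
    ∫ ω, (∑ k ∈ s, ∑ r ∈ t, (Z k r ω - m)) ^ 2 ∂μ ≤ #s * #t * (#s + #t) := by
  classical
  set Y : ι × κ → Ω → ℝ := fun p ω => Z p.1 p.2 ω - m
  have hY : ∀ p, Measurable (Y p) := fun p => (hZ p.1 p.2).sub_const m
  have hZi : ∀ k r, Integrable (Z k r) μ := fun k r =>
    .of_bound (hZ k r).aestronglyMeasurable (|m| + 1) (ae_of_all _ fun ω => by
      have := abs_sub_abs_le_abs_sub (Z k r ω) m
      rw [Real.norm_eq_abs]; linarith [hZm k r ω])
  have hYY_le : ∀ p q ω, ‖Y p ω * Y q ω‖ ≤ 1 := fun p q ω => by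
    simpa [abs_mul] using mul_le_one₀ (hZm p.1 p.2 ω) (abs_nonneg _) (hZm q.1 q.2 ω)
  have hYY : ∀ p q, Integrable (fun ω => Y p ω * Y q ω) μ := fun p q =>
    .of_bound ((hY p).mul (hY q)).aestronglyMeasurable 1 (ae_of_all _ (hYY_le p q))
  have hcov : ∀ p q, ∫ ω, Y p ω * Y q ω ∂μ ≤ if p.1 = q.1 ∨ p.2 = q.2 then 1 else 0 := by
    intro p q
    split_ifs with h
    · simpa using (le_abs_self _).trans
        (norm_integral_le_of_norm_le_const (μ := μ) (ae_of_all _ (hYY_le p q)))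
    · rw [not_or] at h
      have hYpq : IndepFun (Y p) (Y q) μ :=
        (hind p.1 p.2 q.1 q.2 h.1 h.2).comp (measurable_id.sub_const m) (measurable_id.sub_const m)
      have hYp : ∫ ω, Y p ω ∂μ = 0 := by
        simp [Y, integral_sub (hZi p.1 p.2) (integrable_const m), hmean]
      rw [hYpq.integral_fun_mul_eq_mul_integral (hY p).aestronglyMeasurable
        (hY q).aestronglyMeasurable, hYp, zero_mul]
  have hsq : ∀ ω, (∑ k ∈ s, ∑ r ∈ t, (Z k r ω - m)) ^ 2 =
      ∑ p ∈ s ×ˢ t, ∑ q ∈ s ×ˢ t, Y p ω * Y q ω := fun ω => by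
    rw [← sum_product' (f := fun k r => Z k r ω - m), sq, sum_mul_sum]
  calc ∫ ω, (∑ k ∈ s, ∑ r ∈ t, (Z k r ω - m)) ^ 2 ∂μ
      = ∑ p ∈ s ×ˢ t, ∑ q ∈ s ×ˢ t, ∫ ω, Y p ω * Y q ω ∂μ := by
        simp_rw [hsq]
        rw [integral_finsetSum _ fun p _ => integrable_finsetSum _ fun q _ => hYY p q]
        exact sum_congr rfl fun p _ => integral_finsetSum _ fun q _ => hYY p q
    _ ≤ ∑ p ∈ s ×ˢ t, ∑ q ∈ s ×ˢ t, if p.1 = q.1 ∨ p.2 = q.2 then (1 : ℝ) else 0 :=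
        sum_le_sum fun p _ => sum_le_sum fun q _ => hcov p q
    _ ≤ ∑ p ∈ s ×ˢ t, ((#t + #s : ℕ) : ℝ) := sum_le_sum fun p _ => by
        rw [sum_boole]
        exact_mod_cast card_filter_fst_eq_or_snd_eq_le s t p
    _ = #s * #t * (#s + #t) := by
        simp [card_product]
        ring

lemma integral_sq_wHat_sub_le [IsProbabilityMeasure μ] {Y Z : ℕ → Ω → ℝ}
    (hYm : ∀ k, Measurable (Y k)) (hZm : ∀ r, Measurable (Z r))
    (hY : ∀ k, IdentDistrib (Y k) (Y 0) μ μ) (hZ : ∀ r, IdentDistrib (Z r) (Z 0) μ μ)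
    (hind : iIndepFun (Sum.elim Y Z) μ) {n m : ℕ} (hn : 0 < n) (hm : 0 < m) :
    ∫ ω, (wHat Y Z n m ω - ∫ ω, c (Y 0 ω - Z 0 ω) ∂μ) ^ 2 ∂μ ≤ 1 / n + 1 / m := by
  set w := ∫ ω, c (Y 0 ω - Z 0 ω) ∂μ
  have hφ : Measurable fun p : ℝ × ℝ => c (p.1 - p.2) := measurable_c.comp (by fun_prop)
  have hmeas : ∀ j, Measurable (Sum.elim Y Z j) := by
    rintro (k | r)
    exacts [hYm k, hZm r]
  have hmean : ∀ k r, ∫ ω, c (Y k ω - Z r ω) ∂μ = w := fun k r =>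
    (((hY k).prodMk (hZ r) (hind.indepFun Sum.inl_ne_inr) (hind.indepFun Sum.inl_ne_inr)).comp
      hφ).integral_eq
  have hdev : ∀ k r ω, |c (Y k ω - Z r ω) - w| ≤ 1 := fun k r ω => by
    simpa using abs_sub_le_of_le_of_le (c_nonneg _) (c_le_one _)
      (integral_c_mem_Icc _).1 (integral_c_mem_Icc _).2
  have hpairs : ∀ k r k' r', k ≠ k' → r ≠ r' →
      IndepFun (fun ω => c (Y k ω - Z r ω)) (fun ω => c (Y k' ω - Z r' ω)) μ :=
    fun k r k' r' hk hr => (hind.indepFun_prodMk_prodMk hmeas (.inl k) (.inr r) (.inl k')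
      (.inr r') (by simpa using hk) Sum.inl_ne_inr Sum.inr_ne_inl (by simpa using hr)).comp hφ hφ
  have hsum := integral_sq_sum_sum_sub_le (μ := μ) (range n) (range m)
    (fun k r => measurable_c.comp ((hYm k).sub (hZm r))) hdev hmean hpairs
  simp_rw [wHat_sub Y Z hn hm, mul_pow]
  rw [integral_const_mul]
  calc _ ≤ (1 / ((m : ℝ) * n)) ^ 2 * (n * m * (n + m)) := by
        simpa using mul_le_mul_of_nonneg_left hsum (sq_nonneg (1 / ((m : ℝ) * n)))
    _ = 1 / n + 1 / m := by
        field_simp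
        ring

lemma measureReal_lt_abs_wHat_sub_le [IsProbabilityMeasure μ] {Y Z : ℕ → Ω → ℝ}
    (hYm : ∀ k, Measurable (Y k)) (hZm : ∀ r, Measurable (Z r))
    (hY : ∀ k, IdentDistrib (Y k) (Y 0) μ μ) (hZ : ∀ r, IdentDistrib (Z r) (Z 0) μ μ)
    (hind : iIndepFun (Sum.elim Y Z) μ) {n m : ℕ} (hn : 0 < n) (hm : 0 < m) {ε : ℝ}
    (hε : 0 < ε) :
    μ.real {ω | ε < |wHat Y Z n m ω - ∫ ω, c (Y 0 ω - Z 0 ω) ∂μ|} ≤ (1 / n + 1 / m) / ε ^ 2 := by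
  have hbdd : ∀ ω, ‖wHat Y Z n m ω - ∫ ω, c (Y 0 ω - Z 0 ω) ∂μ‖ ≤ 1 := fun ω => by
    simpa using abs_sub_le_of_le_of_le (wHat_mem_Icc Y Z hn hm ω).1 (wHat_mem_Icc Y Z hn hm ω).2
      (integral_c_mem_Icc _).1 (integral_c_mem_Icc _).2
  have hL2 : MemLp (fun ω => wHat Y Z n m ω - ∫ ω, c (Y 0 ω - Z 0 ω) ∂μ) 2 μ :=
    .of_bound ((measurable_wHat hYm hZm n m).sub_const _).aestronglyMeasurable 1 (ae_of_all _ hbdd)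
  exact (measureReal_lt_abs_le_integral_sq_div hL2.integrable_sq hε).trans
    (div_le_div_of_nonneg_right (integral_sq_wHat_sub_le hYm hZm hY hZ hind hn hm) (sq_nonneg ε))

theorem tendsto_measureReal_lt_abs_wHat_sub [IsProbabilityMeasure μ] {Y Z : ℕ → Ω → ℝ}
    (hYm : ∀ k, Measurable (Y k)) (hZm : ∀ r, Measurable (Z r))
    (hY : ∀ k, IdentDistrib (Y k) (Y 0) μ μ) (hZ : ∀ r, IdentDistrib (Z r) (Z 0) μ μ)
    (hind : iIndepFun (Sum.elim Y Z) μ) {n m : ℕ → ℕ} (hn : Tendsto n atTop atTop)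
    (hm : Tendsto m atTop atTop) {ε : ℝ} (hε : 0 < ε) :
    Tendsto (fun N => μ.real {ω | ε < |wHat Y Z (n N) (m N) ω - ∫ ω, c (Y 0 ω - Z 0 ω) ∂μ|})
      atTop (𝓝 0) := by
  have hbound : ∀ᶠ N in atTop,
      μ.real {ω | ε < |wHat Y Z (n N) (m N) ω - ∫ ω, c (Y 0 ω - Z 0 ω) ∂μ|}
        ≤ (1 / (n N : ℝ) + 1 / m N) / ε ^ 2 := by
    filter_upwards [hn.eventually_gt_atTop 0, hm.eventually_gt_atTop 0] with N hnN hmN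
    exact measureReal_lt_abs_wHat_sub_le hYm hZm hY hZ hind hnN hmN hε
  have hlim : Tendsto (fun N => (1 / (n N : ℝ) + 1 / m N) / ε ^ 2) atTop (𝓝 0) := by
    simpa using ((tendsto_one_div_atTop_nhds_zero_nat.comp hn).add
      (tendsto_one_div_atTop_nhds_zero_nat.comp hm)).div_const (ε ^ 2)
  exact squeeze_zero' (.of_forall fun N => measureReal_nonneg) hbound hlim

lemma tendsto_measureReal_lt_abs_mean [IsFiniteMeasure μ] {ι : Type*} (s : Finset ι)
    {S : ι → ℕ → Ω → ℝ} {ε : ℝ} (hε : 0 ≤ ε)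
    (h : ∀ ℓ ∈ s, Tendsto (fun N => μ.real {ω | ε < |S ℓ N ω|}) atTop (𝓝 0)) :
    Tendsto (fun N => μ.real {ω | ε < |(#s : ℝ)⁻¹ * ∑ ℓ ∈ s, S ℓ N ω|}) atTop (𝓝 0) := by
  refine squeeze_zero (fun N => measureReal_nonneg) (fun N => (measureReal_mono
    (setOf_lt_abs_mean_subset s _ hε) (measure_ne_top _ _)).trans
    (measureReal_biUnion_finset_le _ _)) ?_
  simpa using tendsto_finsetSum s h

end Probability

theorem stmt17_general {Ω : Type*} [MeasureSpace Ω] [IsProbabilityMeasure (ℙ : Measure Ω)]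
    (a : ℕ)
    (X : Fin a → ℕ → Ω → ℝ)
    (hXm : ∀ i k, Measurable (X i k))
    (hiid : ∀ i k, Measure.map (X i k) ℙ = Measure.map (X i 0) ℙ)
    (hindep : iIndepFun (fun q : Fin a × ℕ => X q.1 q.2) ℙ)
    (n : ℕ → Fin a → ℕ)
    (hn : ∀ i, Tendsto (fun N => n N i) atTop atTop)
    (w : Fin a → Fin a → ℝ)
    (hw : ∀ ℓ i, w ℓ i = if ℓ = i then 1/2 else
      (ℙ {ω | X ℓ 0 ω < X i 0 ω}).toReal + (1/2) * (ℙ {ω | X ℓ 0 ω = X i 0 ω}).toReal)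
    (p : Fin a → ℝ) (hp : ∀ i, p i = (1/(a:ℝ)) * ∑ ℓ, w ℓ i)
    (phat : ℕ → Fin a → Ω → ℝ)
    (hphat : ∀ N i ω, phat N i ω = (1/(a:ℝ)) * ∑ ℓ, (1/((n N ℓ : ℝ) * (n N i : ℝ))) *
      ∑ k ∈ Finset.range (n N i), ∑ r ∈ Finset.range (n N ℓ), c (X i k ω - X ℓ r ω)) :
    ∀ i, ∀ ε > 0, Tendsto (fun N => (ℙ {ω | ε < |phat N i ω - p i|}).toReal)
      atTop (nhds 0) := by
  intro i ε hε
  have hXid : ∀ ℓ k, IdentDistrib (X ℓ k) (X ℓ 0) ℙ ℙ := fun ℓ k =>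
    ⟨(hXm ℓ k).aemeasurable, (hXm ℓ 0).aemeasurable, hiid ℓ k⟩
  have hpair : ∀ ℓ ∈ univ, Tendsto (fun N =>
      (ℙ : Measure Ω).real {ω | ε < |wHat (X i) (X ℓ) (n N i) (n N ℓ) ω - w ℓ i|}) atTop (𝓝 0) := by
    intro ℓ _
    rcases eq_or_ne ℓ i with rfl | hℓ
    · refine tendsto_const_nhds.congr' ?_
      filter_upwards [(hn ℓ).eventually_gt_atTop 0] with N hN
      simp [wHat_self _ hN, hw, hε.not_gt]
    · have hwℓ : w ℓ i = ∫ ω, c (X i 0 ω - X ℓ 0 ω) := by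
        rw [hw, if_neg hℓ, integral_c_sub (hXm i 0) (hXm ℓ 0)]
        rfl
      rw [hwℓ]
      exact tendsto_measureReal_lt_abs_wHat_sub (hXm i) (hXm ℓ) (hXid i) (hXid ℓ)
        (hindep.sumElim_of_ne hℓ.symm) (hn i) (hn ℓ) hε
  have hdev : ∀ N ω, phat N i ω - p i = (#(univ : Finset (Fin a)) : ℝ)⁻¹ *
      ∑ ℓ, (wHat (X i) (X ℓ) (n N i) (n N ℓ) ω - w ℓ i) := by
    intro N ω
    rw [hphat, hp, card_univ, Fintype.card_fin, ← one_div, ← mul_sub, ← sum_sub_distrib]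
    rfl
  simp_rw [hdev]
  exact tendsto_measureReal_lt_abs_mean univ hε.le hpair

/-- Consistency of the plug-in estimator `p̂_i = ∫ Ĝ dF̂_i`: for i.i.d. observations
within each of `a` independent groups with sample sizes tending to infinity,
`p̂_i → p_i = (1/a) ∑_ℓ w_{ℓi}` in probability. -/
theorem stmt17 {Ω : Type*} [MeasureSpace Ω] [IsProbabilityMeasure (ℙ : Measure Ω)]
    (a : ℕ) (ha : 0 < a)
    (X : Fin a → ℕ → Ω → ℝ)
    (hXm : ∀ i k, Measurable (X i k))
    (hiid : ∀ i k, Measure.map (X i k) ℙ = Measure.map (X i 0) ℙ)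
    (hindep : iIndepFun (fun q : Fin a × ℕ => X q.1 q.2) ℙ)
    (n : ℕ → Fin a → ℕ) (hn0 : ∀ N i, 0 < n N i)
    (hn : ∀ i, Tendsto (fun N => n N i) atTop atTop)
    (w : Fin a → Fin a → ℝ)
    (hw : ∀ ℓ i, w ℓ i = if ℓ = i then 1/2 else
      (ℙ {ω | X ℓ 0 ω < X i 0 ω}).toReal + (1/2) * (ℙ {ω | X ℓ 0 ω = X i 0 ω}).toReal)
    (p : Fin a → ℝ) (hp : ∀ i, p i = (1/(a:ℝ)) * ∑ ℓ, w ℓ i)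
    (phat : ℕ → Fin a → Ω → ℝ)
    (hphat : ∀ N i ω, phat N i ω = (1/(a:ℝ)) * ∑ ℓ, (1/((n N ℓ : ℝ) * (n N i : ℝ))) *
      ∑ k ∈ Finset.range (n N i), ∑ r ∈ Finset.range (n N ℓ), c (X i k ω - X ℓ r ω)) :
    ∀ i, ∀ ε > 0, Tendsto (fun N => (ℙ {ω | ε < |phat N i ω - p i|}).toReal)
      atTop (nhds 0) :=
  stmt17_general a X hXm hiid hindep n hn w hw p hp phat hphat
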